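/- If γ, δ ∈ H_β for some β in the Kostant cascade of a semisimple Lie algebra and γ + δ is a root, then γ + δ = β. -/

import Mathlib

/- Kostant cascade machinery for a root system in a real inner product space. -/

open scoped RealInnerProductSpace

variable {V : Type*} [NormedAddCommGroup V] [InnerProductSpace ℝ V]

/-- Two roots of `Rs` are linked if they are not orthogonal. -/
def Linked (Rs : Set V) (a b : V) : Prop := a ∈ Rs ∧ b ∈ Rs ∧ ⟪a, b⟫ ≠ 0

/-- `C` is an irreducible component of the root subsystem `Rs` :
it is a connectedness class of the non-orthogonality relation. -/
def IsComponent (Rs : Set V) (C : Set V) : Prop :=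
  ∃ a ∈ Rs, C = {b | Relation.ReflTransGen (Linked Rs) a b}

/-- `β` is the highest root of the (irreducible) subsystem `C` of `Rs`
with respect to the positive system `pos`. -/
def IsHighestRoot (Rs pos C : Set V) (β : V) : Prop :=
  β ∈ C ∧ β ∈ pos ∧ ∀ α ∈ C, α ∈ pos → β + α ∉ Rs

/-- The subsystems occurring in the recursive construction of the Kostant cascade:
irreducible components of `Rs`, and recursively irreducible components of the
orthogonal complement of the highest root of a cascade subsystem. -/
inductive CascadeSub (Rs pos : Set V) : Set V → Prop
  | base (C : Set V) : IsComponent Rs C → CascadeSub Rs pos C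
  | step (K C : Set V) (β : V) : CascadeSub Rs pos K → IsHighestRoot Rs pos K β →
      IsComponent {α ∈ K | ⟪α, β⟫ = 0} C → CascadeSub Rs pos C

/-- The Kostant cascade `β_π` : the highest roots of the cascade subsystems. -/
def cascadeSet (Rs pos : Set V) : Set V :=
  {β | ∃ K, CascadeSub Rs pos K ∧ IsHighestRoot Rs pos K β}

/-- `H_β = {α ∈ Δ_K : (α, β) > 0}` where `Δ_K` is the cascade subsystem with
highest root `β`. -/
def cascadeH (Rs pos : Set V) (β : V) : Set V :=
  {α | ∃ K, CascadeSub Rs pos K ∧ IsHighestRoot Rs pos K β ∧ α ∈ K ∧ 0 < ⟪α, β⟫}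

/-- `Rs` is a (reduced, crystallographic) root system, as the set of roots of a
semisimple Lie algebra. -/
structure IsRootSystem (Rs : Set V) : Prop where
  finite : Rs.Finite
  ne_zero : (0 : V) ∉ Rs
  neg_mem : ∀ α ∈ Rs, -α ∈ Rs
  reduced : ∀ α ∈ Rs, ∀ t : ℝ, t • α ∈ Rs → t = 1 ∨ t = -1
  crystallographic : ∀ α ∈ Rs, ∀ β ∈ Rs, ∃ z : ℤ, 2 * ⟪β, α⟫ / ⟪α, α⟫ = (z : ℝ)
  reflect_mem : ∀ α ∈ Rs, ∀ β ∈ Rs, β - (2 * ⟪β, α⟫ / ⟪α, α⟫) • α ∈ Rs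

/-- `pos` is a system of positive roots for `Rs`. -/
structure IsPositiveSystem (Rs pos : Set V) : Prop where
  subset : pos ⊆ Rs
  pos_iff : ∀ α ∈ Rs, (α ∈ pos ↔ -α ∉ pos)
  add_mem : ∀ α ∈ pos, ∀ β ∈ pos, α + β ∈ Rs → α + β ∈ pos


/-!
Let `β` be the highest root of an irreducible cascade subsystem `K`. A root `α ≠ β` of `K` with
`(α, β) > 0` has `2 (α, β) = (β, β)`: `β - α` is then a positive root of `K`, so the dominance
`(β - α, β) ≥ 0` bounds the Cartan integer `2 (α, β) / (β, β)` by `2`, and the value `2` would make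
the reflection `2β - α = β + (β - α)` a root. Were `γ + δ ≠ β` a root, it would lie in `K` (it is
in the span of `K` and not orthogonal to `β`), so `2 (γ + δ, β) = (β, β)`, while `2 (γ, β)` and
`2 (δ, β)` are both at least `(β, β)`.

The subsystems witnessing `γ, δ ∈ H_β` may a priori differ; both contain `β`, and cascade
subsystems are laminar: two of them that meet are nested.
-/

open Relation

instance Linked.instSymm (S : Set V) : Std.Symm (Linked S) where
  symm _ _ h := ⟨h.2.1, h.1, by rw [real_inner_comm]; exact h.2.2⟩

def IsLinkedConnected (K : Set V) : Prop :=
  ∀ x ∈ K, ∀ y ∈ K, ReflTransGen (Linked K) x y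

namespace IsComponent

variable {S C : Set V}

theorem subset (hC : IsComponent S C) : C ⊆ S := by
  obtain ⟨a, ha, rfl⟩ := hC
  intro b hb
  induction hb with
  | refl => exact ha
  | tail _ h => exact h.2.1

theorem nonempty (hC : IsComponent S C) : C.Nonempty := by
  obtain ⟨a, -, rfl⟩ := hC
  exact ⟨a, .refl⟩

theorem mem_of_inner_ne_zero (hC : IsComponent S C) {y w : V} (hy : y ∈ C) (hw : w ∈ S)
    (hyw : ⟪y, w⟫ ≠ 0) : w ∈ C := by
  have hyS := hC.subset hy
  obtain ⟨a, -, rfl⟩ := hC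
  exact hy.tail ⟨hyS, hw, hyw⟩

theorem isLinkedConnected (hC : IsComponent S C) : IsLinkedConnected C := by
  obtain ⟨a, -, rfl⟩ := hC
  have from_base : ∀ b, ReflTransGen (Linked S) a b →
      ReflTransGen (Linked {b | ReflTransGen (Linked S) a b}) a b := by
    intro b hb
    induction hb with
    | refl => exact .refl
    | tail hab hbc ih => exact ih.tail ⟨hab, hab.tail hbc, hbc.2.2⟩
  intro x hx y hy
  exact (symm (from_base x hx)).trans (from_base y hy)

theorem subset_of_isLinkedConnected (hC : IsComponent S C) {T : Set V} (hTS : T ⊆ S)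
    (hT : IsLinkedConnected T) {x : V} (hxT : x ∈ T) (hxC : x ∈ C) : T ⊆ C := by
  intro y hy
  have hxy : ReflTransGen (Linked S) x y :=
    ReflTransGen.mono (fun a b hab => ⟨hTS hab.1, hTS hab.2.1, hab.2.2⟩) x y (hT x hxT y hy)
  obtain ⟨a, -, rfl⟩ := hC
  exact hxC.trans hxy

end IsComponent

namespace IsRootSystem

variable {Rs : Set V} {α β : V}

theorem inner_self_pos (hRS : IsRootSystem Rs) (hα : α ∈ Rs) : 0 < ⟪α, α⟫ :=
  real_inner_self_pos.mpr (ne_of_mem_of_not_mem hα hRS.ne_zero)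

theorem exists_int_two_inner_eq (hRS : IsRootSystem Rs) (hα : α ∈ Rs) (hβ : β ∈ Rs) :
    ∃ z : ℤ, 2 * ⟪α, β⟫ = z * ⟪β, β⟫ := by
  obtain ⟨z, hz⟩ := hRS.crystallographic β hβ α hα
  exact ⟨z, (div_eq_iff (hRS.inner_self_pos hβ).ne').mp hz⟩

theorem sub_smul_mem (hRS : IsRootSystem Rs) (hα : α ∈ Rs) (hβ : β ∈ Rs) {c : ℝ}
    (hc : 2 * ⟪α, β⟫ = c * ⟪β, β⟫) : α - c • β ∈ Rs := by
  have := hRS.reflect_mem β hβ α hα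
  rwa [hc, mul_div_cancel_right₀ _ (hRS.inner_self_pos hβ).ne'] at this

theorem inner_sq_lt (hRS : IsRootSystem Rs) (hα : α ∈ Rs) (hβ : β ∈ Rs) (h₁ : α ≠ β)
    (h₂ : α ≠ -β) : ⟪α, β⟫ ^ 2 < ⟪α, α⟫ * ⟪β, β⟫ := by
  refine (sq ⟪α, β⟫ ▸ real_inner_mul_inner_self_le α β).lt_of_ne fun heq => ?_
  have hnorm : ‖⟪β, α⟫‖ = ‖β‖ * ‖α‖ := by
    rw [Real.norm_eq_abs, ← sq_eq_sq₀ (abs_nonneg _) (by positivity), sq_abs, real_inner_comm,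
      heq, real_inner_self_eq_norm_sq, real_inner_self_eq_norm_sq]
    ring
  obtain ⟨r, -, rfl⟩ := (norm_inner_eq_norm_iff (ne_of_mem_of_not_mem hβ hRS.ne_zero)
    (ne_of_mem_of_not_mem hα hRS.ne_zero)).mp hnorm
  rcases hRS.reduced β hβ r hα with rfl | rfl
  · exact h₁ (one_smul ℝ β)
  · exact h₂ (neg_one_smul ℝ β)

theorem sub_mem_of_inner_pos (hRS : IsRootSystem Rs) (hα : α ∈ Rs) (hβ : β ∈ Rs)
    (hαβ : 0 < ⟪α, β⟫) (hne : α ≠ β) : α - β ∈ Rs := by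
  have hA := hRS.inner_self_pos hα
  have hB := hRS.inner_self_pos hβ
  have hne' : α ≠ -β := by
    rintro rfl
    rw [inner_neg_left] at hαβ
    linarith
  have hcs := hRS.inner_sq_lt hα hβ hne hne'
  obtain ⟨z₁, e₁⟩ := hRS.exists_int_two_inner_eq hα hβ
  obtain ⟨z₂, e₂⟩ := hRS.exists_int_two_inner_eq hβ hα
  have e₂' : 2 * ⟪α, β⟫ = z₂ * ⟪α, α⟫ := by rw [real_inner_comm]; exact e₂
  have hz₁ : (0 : ℝ) < z₁ := by nlinarith
  have hz₂ : (0 : ℝ) < z₂ := by nlinarith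
  -- the product of the two Cartan integers is `4 (α, β)² / ((α, α) (β, β)) < 4`
  have hprod : (z₁ : ℝ) * z₂ < 4 := by
    have hAB := mul_pos hA hB
    nlinarith
  have hz₁' : 0 < z₁ := by exact_mod_cast hz₁
  have hz₂' : 0 < z₂ := by exact_mod_cast hz₂
  have hprod' : z₁ * z₂ < 4 := by exact_mod_cast hprod
  rcases (show z₁ = 1 ∨ z₂ = 1 by by_contra! h; nlinarith [show 2 ≤ z₁ by omega, show 2 ≤ z₂ by omega]) with rfl | rfl
  · simpa using hRS.sub_smul_mem hα hβ e₁
  · simpa using hRS.neg_mem _ (hRS.sub_smul_mem hβ hα e₂)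

theorem add_mem_of_inner_neg (hRS : IsRootSystem Rs) (hα : α ∈ Rs) (hβ : β ∈ Rs)
    (hαβ : ⟪α, β⟫ < 0) (hne : α ≠ -β) : α + β ∈ Rs := by
  simpa using hRS.sub_mem_of_inner_pos hα (hRS.neg_mem β hβ)
    (by rw [inner_neg_right]; linarith) hne

end IsRootSystem

/-- `K` is an irreducible component of the root subsystem `Rs ∩ span K`. -/
structure IsIrreducibleSubsystem (Rs K : Set V) : Prop where
  subset : K ⊆ Rs
  mem_of_mem_span : ∀ w ∈ Rs, w ∈ Submodule.span ℝ K → ∀ z ∈ K, ⟪z, w⟫ ≠ 0 → w ∈ K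
  isLinkedConnected : IsLinkedConnected K

namespace IsIrreducibleSubsystem

variable {Rs K : Set V} {α β : V}

theorem neg_mem (hRS : IsRootSystem Rs) (hK : IsIrreducibleSubsystem Rs K) (hα : α ∈ K) :
    -α ∈ K :=
  hK.mem_of_mem_span _ (hRS.neg_mem α (hK.subset hα)) (Submodule.neg_mem _ (Submodule.subset_span hα)) α hα
    (by rw [inner_neg_right, neg_ne_zero]; exact (hRS.inner_self_pos (hK.subset hα)).ne')

theorem sub_mem (hRS : IsRootSystem Rs) (hK : IsIrreducibleSubsystem Rs K) (hα : α ∈ K)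
    (hβ : β ∈ K) (hαβ : 0 < ⟪α, β⟫) (hne : α ≠ β) : α - β ∈ K := by
  have hspan : α - β ∈ Submodule.span ℝ K :=
    Submodule.sub_mem _ (Submodule.subset_span hα) (Submodule.subset_span hβ)
  have hRs := hRS.sub_mem_of_inner_pos (hK.subset hα) (hK.subset hβ) hαβ hne
  by_cases hα' : ⟪α, α - β⟫ = 0
  · refine hK.mem_of_mem_span _ hRs hspan β hβ fun hβ' => hne ?_
    rw [← sub_eq_zero, ← inner_self_eq_zero (𝕜 := ℝ), inner_sub_left, hα', hβ', sub_zero]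
  · exact hK.mem_of_mem_span _ hRs hspan α hα hα'

theorem exists_inner_ne_zero (hRS : IsRootSystem Rs) (hK : IsIrreducibleSubsystem Rs K)
    {x y : V} (hx : x ∈ K) (hy : y ∈ K) : ∃ u ∈ K, ⟪u, x⟫ ≠ 0 ∧ ⟪u, y⟫ ≠ 0 := by
  induction hK.isLinkedConnected x hx y hy with
  | refl =>
    have hxx := (hRS.inner_self_pos (hK.subset hx)).ne'
    exact ⟨x, hx, hxx, hxx⟩
  | @tail c d _ hcd ih =>
    obtain ⟨hc, hd, hcd⟩ := hcd
    obtain ⟨u, hu, hux, huc⟩ := ih hc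
    rcases ne_or_eq ⟪u, d⟫ 0 with hud | hud
    · exact ⟨u, hu, hux, hud⟩
    rcases ne_or_eq ⟪c, x⟫ 0 with hcx | hcx
    · exact ⟨c, hc, hcx, hcd⟩
    -- reflecting `u` in `c` keeps it linked to `x` (as `c ⊥ x`) and links it to `d` (as `u ⊥ d`)
    set t := 2 * ⟪u, c⟫ / ⟪c, c⟫
    have ht : t ≠ 0 := div_ne_zero (mul_ne_zero two_ne_zero huc)
      (hRS.inner_self_pos (hK.subset hc)).ne'
    have hux' : ⟪u - t • c, x⟫ ≠ 0 := by
      rwa [inner_sub_left, real_inner_smul_left, hcx, mul_zero, sub_zero]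
    have hud' : ⟪u - t • c, d⟫ ≠ 0 := by
      rw [inner_sub_left, real_inner_smul_left, hud, zero_sub, neg_ne_zero]
      exact mul_ne_zero ht hcd
    have hspan : u - t • c ∈ Submodule.span ℝ K :=
      Submodule.sub_mem _ (Submodule.subset_span hu) (Submodule.smul_mem _ t (Submodule.subset_span hc))
    refine ⟨u - t • c, ?_, hux', hud'⟩
    exact hK.mem_of_mem_span _ (hRS.reflect_mem c (hK.subset hc) u (hK.subset hu)) hspan x hx
      (by rwa [real_inner_comm])

end IsIrreducibleSubsystem

namespace IsHighestRoot

variable {Rs pos K : Set V} {α β γ δ : V}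

theorem inner_nonneg (hRS : IsRootSystem Rs) (hpos : IsPositiveSystem Rs pos) (hKRs : K ⊆ Rs)
    (hb : IsHighestRoot Rs pos K β) (hα : α ∈ K) (hαpos : α ∈ pos) : 0 ≤ ⟪α, β⟫ := by
  by_contra! hneg
  by_cases hαβ : α = -β
  · exact (hpos.pos_iff β (hKRs hb.1)).mp hb.2.1 (hαβ ▸ hαpos)
  · exact hb.2.2 α hα hαpos
      (add_comm α β ▸ hRS.add_mem_of_inner_neg (hKRs hα) (hKRs hb.1) hneg hαβ)

theorem sub_mem_and_mem_pos (hRS : IsRootSystem Rs) (hpos : IsPositiveSystem Rs pos)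
    (hK : IsIrreducibleSubsystem Rs K) (hb : IsHighestRoot Rs pos K β) (hα : α ∈ K)
    (hαβ : 0 < ⟪α, β⟫) (hne : α ≠ β) : β - α ∈ K ∧ β - α ∈ pos := by
  have hsub : β - α ∈ K := hK.sub_mem hRS hb.1 hα (by rwa [real_inner_comm]) hne.symm
  refine ⟨hsub, ?_⟩
  by_contra hnot
  have hsub' : α - β ∈ K := neg_sub β α ▸ hK.neg_mem hRS hsub
  have hpos' : α - β ∈ pos := (hpos.pos_iff _ (hK.subset hsub')).mpr (by rwa [neg_sub])
  exact hb.2.2 _ hsub' hpos' (by rw [add_sub_cancel]; exact hK.subset hα)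

theorem two_inner_eq (hRS : IsRootSystem Rs) (hpos : IsPositiveSystem Rs pos)
    (hK : IsIrreducibleSubsystem Rs K) (hb : IsHighestRoot Rs pos K β) (hα : α ∈ K)
    (hαβ : 0 < ⟪α, β⟫) (hne : α ≠ β) : 2 * ⟪α, β⟫ = ⟪β, β⟫ := by
  obtain ⟨hsubK, hsubpos⟩ := hb.sub_mem_and_mem_pos hRS hpos hK hα hαβ hne
  have hB := hRS.inner_self_pos (hK.subset hb.1)
  obtain ⟨z, hz⟩ := hRS.exists_int_two_inner_eq (hK.subset hα) (hK.subset hb.1)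
  have hle : ⟪α, β⟫ ≤ ⟪β, β⟫ := by
    have := hb.inner_nonneg hRS hpos hK.subset hsubK hsubpos
    rw [inner_sub_left] at this
    linarith
  have hz₀ : 0 < z := by
    have : (0 : ℝ) < z := by nlinarith
    exact_mod_cast this
  have hz₂ : z ≤ 2 := by
    have : (z : ℝ) ≤ 2 := by nlinarith
    exact_mod_cast this
  have hz₂' : z ≠ 2 := by
    rintro rfl
    -- the reflection `α - 2β` of `α` in `β` is the negative of `β + (β - α)`
    refine hb.2.2 _ hsubK hsubpos ?_
    have := hRS.neg_mem _ (hRS.sub_smul_mem (hK.subset hα) (hK.subset hb.1) hz)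
    convert this using 1
    push_cast
    rw [two_smul]
    abel
  obtain rfl : z = 1 := by omega
  simpa using hz

theorem le_two_inner (hRS : IsRootSystem Rs) (hpos : IsPositiveSystem Rs pos)
    (hK : IsIrreducibleSubsystem Rs K) (hb : IsHighestRoot Rs pos K β) (hα : α ∈ K)
    (hαβ : 0 < ⟪α, β⟫) : ⟪β, β⟫ ≤ 2 * ⟪α, β⟫ := by
  rcases eq_or_ne α β with rfl | hne
  · linarith
  · exact (hb.two_inner_eq hRS hpos hK hα hαβ hne).ge

theorem add_eq (hRS : IsRootSystem Rs) (hpos : IsPositiveSystem Rs pos)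
    (hK : IsIrreducibleSubsystem Rs K) (hb : IsHighestRoot Rs pos K β) (hγ : γ ∈ K)
    (hδ : δ ∈ K) (hγβ : 0 < ⟪γ, β⟫) (hδβ : 0 < ⟪δ, β⟫) (hroot : γ + δ ∈ Rs) : γ + δ = β := by
  have hsum : ⟪γ + δ, β⟫ = ⟪γ, β⟫ + ⟪δ, β⟫ := inner_add_left γ δ β
  have hpos' : 0 < ⟪γ + δ, β⟫ := hsum ▸ add_pos hγβ hδβ
  have hmem : γ + δ ∈ K :=
    hK.mem_of_mem_span _ hroot (add_mem (Submodule.subset_span hγ) (Submodule.subset_span hδ))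
      β hb.1 (by rw [real_inner_comm]; exact hpos'.ne')
  by_contra hne
  have := hb.two_inner_eq hRS hpos hK hmem hpos' hne
  have := hb.le_two_inner hRS hpos hK hγ hγβ
  have := hb.le_two_inner hRS hpos hK hδ hδβ
  linarith [hRS.inner_self_pos (hK.subset hb.1)]

theorem unique (hRS : IsRootSystem Rs) (hpos : IsPositiveSystem Rs pos)
    (hK : IsIrreducibleSubsystem Rs K) {β₁ β₂ : V} (h₁ : IsHighestRoot Rs pos K β₁)
    (h₂ : IsHighestRoot Rs pos K β₂) : β₁ = β₂ := by
  by_contra hne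
  rcases (h₂.inner_nonneg hRS hpos hK.subset h₁.1 h₁.2.1).lt_or_eq with hlt | horth
  · obtain ⟨hsubK, hsubpos⟩ := h₂.sub_mem_and_mem_pos hRS hpos hK h₁.1 hlt hne
    exact h₁.2.2 _ hsubK hsubpos (by rw [add_sub_cancel]; exact hK.subset h₂.1)
  obtain ⟨u, hu, hu₁, hu₂⟩ := hK.exists_inner_ne_zero hRS h₁.1 h₂.1
  wlog hupos : u ∈ pos generalizing u
  · refine this (-u) (hK.neg_mem hRS hu) ?_ ?_ ?_
    · rwa [inner_neg_left, neg_ne_zero]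
    · rwa [inner_neg_left, neg_ne_zero]
    · by_contra h
      exact hupos ((hpos.pos_iff u (hK.subset hu)).mpr h)
  have hu₁' : 0 < ⟪u, β₁⟫ := (h₁.inner_nonneg hRS hpos hK.subset hu hupos).lt_of_ne' hu₁
  have hu₂' : 0 < ⟪u, β₂⟫ := (h₂.inner_nonneg hRS hpos hK.subset hu hupos).lt_of_ne' hu₂
  have hne' : u ≠ β₂ := by
    rintro rfl
    exact hu₁ (by rw [real_inner_comm, horth])
  obtain ⟨hsubK, hsubpos⟩ := h₂.sub_mem_and_mem_pos hRS hpos hK hu hu₂' hne'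
  have := h₁.inner_nonneg hRS hpos hK.subset hsubK hsubpos
  rw [inner_sub_left, real_inner_comm, ← horth] at this
  linarith

end IsHighestRoot

namespace CascadeSub

variable {Rs pos K L : Set V}

theorem isIrreducibleSubsystem (h : CascadeSub Rs pos K) : IsIrreducibleSubsystem Rs K := by
  induction h with
  | base C hC =>
    exact ⟨hC.subset, fun w hw _ z hz hzw => hC.mem_of_inner_ne_zero hz hw hzw,
      hC.isLinkedConnected⟩
  | step K C β _ _ hC ih =>
    have hCK : C ⊆ K := fun x hx => (hC.subset hx).1
    refine ⟨hCK.trans ih.subset, fun w hw hspan z hz hzw => ?_, hC.isLinkedConnected⟩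
    have hwK : w ∈ K := ih.mem_of_mem_span w hw (Submodule.span_mono hCK hspan) z (hCK hz) hzw
    have hperp : Submodule.span ℝ C ≤ (ℝ ∙ β)ᗮ := Submodule.span_le.mpr fun x hx =>
      Submodule.mem_orthogonal_singleton_iff_inner_left.mpr (hC.subset hx).2
    exact hC.mem_of_inner_ne_zero hz
      ⟨hwK, Submodule.mem_orthogonal_singleton_iff_inner_left.mp (hperp hspan)⟩ hzw

end CascadeSub

def NestedIfMeet {α : Type*} (K L : Set α) : Prop :=
  (K ∩ L).Nonempty → K ⊆ L ∨ L ⊆ K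

theorem NestedIfMeet.symm {α : Type*} {K L : Set α} (h : NestedIfMeet K L) : NestedIfMeet L K :=
  fun hLK => (h (Set.inter_comm K L ▸ hLK)).symm

/-- The companion invariant that makes the induction proving laminarity go through. -/
def EqOrOrthOfSubset (Rs pos K L : Set V) : Prop :=
  K ⊆ L → ∀ β, IsHighestRoot Rs pos L β → K = L ∨ ∀ y ∈ K, ⟪y, β⟫ = 0

section Laminar

variable {Rs pos K L : Set V}

theorem IsComponent.nestedIfMeet (hL : IsComponent Rs L) (hK : IsIrreducibleSubsystem Rs K) :
    NestedIfMeet K L := fun ⟨_, hxK, hxL⟩ =>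
  Or.inl (hL.subset_of_isLinkedConnected hK.subset hK.isLinkedConnected hxK hxL)

theorem IsComponent.eqOrOrthOfSubset (hK : IsComponent Rs K)
    (hL : IsIrreducibleSubsystem Rs L) : EqOrOrthOfSubset Rs pos K L := fun hKL _ _ =>
  let ⟨_, hx⟩ := hK.nonempty
  Or.inl (hKL.antisymm
    (hK.subset_of_isLinkedConnected hL.subset hL.isLinkedConnected (hKL hx) hx))

theorem nestedIfMeet_of_isComponent_orth {L' : Set V} {β' : V}
    (hK : IsIrreducibleSubsystem Rs K) (hb' : IsHighestRoot Rs pos L' β')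
    (hL : IsComponent {α ∈ L' | ⟪α, β'⟫ = 0} L) (hnest : NestedIfMeet K L')
    (horth : EqOrOrthOfSubset Rs pos K L') : NestedIfMeet K L := by
  rintro ⟨x, hxK, hxL⟩
  have hLL' : L ⊆ L' := fun y hy => (hL.subset hy).1
  rcases hnest ⟨x, hxK, hLL' hxL⟩ with hKL' | hL'K
  · rcases horth hKL' β' hb' with rfl | hperp
    · exact Or.inr hLL'
    · exact Or.inl (hL.subset_of_isLinkedConnected (fun y hy => ⟨hKL' hy, hperp y hy⟩)
        hK.isLinkedConnected hxK hxL)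
  · exact Or.inr (hLL'.trans hL'K)

theorem eqOrOrthOfSubset_of_isComponent_orth (hRS : IsRootSystem Rs)
    (hpos : IsPositiveSystem Rs pos) {K' : Set V} {β' : V} (hK' : IsIrreducibleSubsystem Rs K')
    (hL : IsIrreducibleSubsystem Rs L) (hb' : IsHighestRoot Rs pos K' β')
    (hK : IsComponent {α ∈ K' | ⟪α, β'⟫ = 0} K) (hnest : NestedIfMeet K' L)
    (h₁ : EqOrOrthOfSubset Rs pos K' L) (h₂ : EqOrOrthOfSubset Rs pos L K') :
    EqOrOrthOfSubset Rs pos K L := by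
  intro hKL β hb
  obtain ⟨x, hx⟩ := hK.nonempty
  have hKK' : K ⊆ K' := fun y hy => (hK.subset hy).1
  have of_eq : K' = L → K = L ∨ ∀ y ∈ K, ⟪y, β⟫ = 0 := by
    rintro rfl
    rw [← hb'.unique hRS hpos hK' hb]
    exact Or.inr fun y hy => (hK.subset hy).2
  rcases hnest ⟨x, hKK' hx, hKL hx⟩ with hK'L | hLK'
  · rcases h₁ hK'L β hb with heq | hperp
    · exact of_eq heq
    · exact Or.inr fun y hy => hperp y (hKK' hy)
  · rcases h₂ hLK' β' hb' with heq | hperp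
    · exact of_eq heq.symm
    · exact Or.inl (hKL.antisymm (hK.subset_of_isLinkedConnected
        (fun y hy => ⟨hLK' hy, hperp y hy⟩) hL.isLinkedConnected (hKL hx) hx))

theorem CascadeSub.laminar_of_eqOrOrthOfSubset (hRS : IsRootSystem Rs)
    (hpos : IsPositiveSystem Rs pos) (hK : CascadeSub Rs pos K)
    (hKL : ∀ {L}, CascadeSub Rs pos L → EqOrOrthOfSubset Rs pos K L) (hL : CascadeSub Rs pos L) :
    NestedIfMeet K L ∧ EqOrOrthOfSubset Rs pos K L ∧ EqOrOrthOfSubset Rs pos L K := by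
  have hKirr := hK.isIrreducibleSubsystem
  induction hL with
  | base L hLc => exact ⟨hLc.nestedIfMeet hKirr, hKL (.base L hLc), hLc.eqOrOrthOfSubset hKirr⟩
  | step L' L β' hL' hb' hLc ih =>
    exact ⟨nestedIfMeet_of_isComponent_orth hKirr hb' hLc ih.1 ih.2.1,
      hKL (.step L' L β' hL' hb' hLc),
      eqOrOrthOfSubset_of_isComponent_orth hRS hpos hL'.isIrreducibleSubsystem hKirr hb' hLc
        ih.1.symm ih.2.2 ih.2.1⟩

theorem CascadeSub.laminar (hRS : IsRootSystem Rs) (hpos : IsPositiveSystem Rs pos)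
    (hK : CascadeSub Rs pos K) (hL : CascadeSub Rs pos L) :
    NestedIfMeet K L ∧ EqOrOrthOfSubset Rs pos K L ∧ EqOrOrthOfSubset Rs pos L K := by
  induction hK generalizing L with
  | base K hKc =>
    exact (CascadeSub.base K hKc).laminar_of_eqOrOrthOfSubset hRS hpos
      (fun hL => hKc.eqOrOrthOfSubset hL.isIrreducibleSubsystem) hL
  | step K' K β' hK' hb' hKc ihK =>
    refine (CascadeSub.step K' K β' hK' hb' hKc).laminar_of_eqOrOrthOfSubset hRS hpos
      (fun hL => ?_) hL
    obtain ⟨hnest, h₁, h₂⟩ := ihK hL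
    exact eqOrOrthOfSubset_of_isComponent_orth hRS hpos hK'.isIrreducibleSubsystem
      hL.isIrreducibleSubsystem hb' hKc hnest h₁ h₂

theorem CascadeSub.subset_or_subset (hRS : IsRootSystem Rs) (hpos : IsPositiveSystem Rs pos)
    (hK : CascadeSub Rs pos K) (hL : CascadeSub Rs pos L) {x : V} (hxK : x ∈ K) (hxL : x ∈ L) :
    K ⊆ L ∨ L ⊆ K :=
  (hK.laminar hRS hpos hL).1 ⟨x, hxK, hxL⟩

end Laminar

theorem statement_2_general (Rs pos : Set V) (hRS : IsRootSystem Rs)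
    (hpos : IsPositiveSystem Rs pos) (γ δ β : V)
    (hγ : γ ∈ cascadeH Rs pos β) (hδ : δ ∈ cascadeH Rs pos β) (hroot : γ + δ ∈ Rs) :
    γ + δ = β := by
  obtain ⟨K₁, hK₁, hb₁, hγK, hγβ⟩ := hγ
  obtain ⟨K₂, hK₂, hb₂, hδK, hδβ⟩ := hδ
  rcases hK₁.subset_or_subset hRS hpos hK₂ hb₁.1 hb₂.1 with h | h
  · exact hb₂.add_eq hRS hpos hK₂.isIrreducibleSubsystem (h hγK) hδK hγβ hδβ hroot
  · exact hb₁.add_eq hRS hpos hK₁.isIrreducibleSubsystem hγK (h hδK) hγβ hδβ hroot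

/-- If `γ, δ ∈ H_β` for an element `β` of the Kostant cascade and
`γ + δ` is a root, then `γ + δ = β`. -/
theorem statement_2 (Rs pos : Set V) (hRS : IsRootSystem Rs)
    (hpos : IsPositiveSystem Rs pos) (γ δ β : V) (hβ : β ∈ cascadeSet Rs pos)
    (hγ : γ ∈ cascadeH Rs pos β) (hδ : δ ∈ cascadeH Rs pos β) (hroot : γ + δ ∈ Rs) :
    γ + δ = β :=
  statement_2_general Rs pos hRS hpos γ δ β hγ hδ hroot
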